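/- arXiv:1706.00794 — 6 statements merged into one kernel-verified Lean document; each statement's English description precedes it below -/
import Mathlib

section
/- Let γ ⊂ ℝ^d be locally finite and satisfy the density condition with constant a > 0 for interaction radius r > 0, and let {V_{xy}} be an admissible family with interaction radius r and Lipschitz constant C > 0 which additionally satisfies |V_{xy}(0,0)| ≤ C for all x, y ∈ γ. Fix 0 < α_* < α^*. Then there exists a constant L > 0 (depending only on γ, C, a, r, d, α_*, α^*) such that for all α_* ≤ α < β ≤ α^* and every q : γ → ℝ with ‖q‖_α < ∞, the family (|V̄_x(q)|² e^{−β|x|})_{x∈γ} is summable and ∑_{x∈γ} |V̄_x(q)|² e^{−β|x|} ≤ L² (β − α)^{−1} (1 + ‖q‖_α)². -/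
open scoped BigOperators

noncomputable section

/-- The finite set `γ_{x,r} = {y ∈ γ : |x - y| < r}` of points of `γ` within
distance `r` of `x`, given local finiteness of `γ`. -/
def nbhd {d : ℕ} (γ : Set (EuclideanSpace ℝ (Fin d)))
    (hLF : ∀ (x : EuclideanSpace ℝ (Fin d)) (R : ℝ), {y ∈ γ | dist x y < R}.Finite)
    (r : ℝ) (x : EuclideanSpace ℝ (Fin d)) : Finset (EuclideanSpace ℝ (Fin d)) :=
  (hLF x r).toFinset

/-- `n_{x,r}(γ)`, the number of points of `γ` within distance `r` of `x`. -/
def npts {d : ℕ} (γ : Set (EuclideanSpace ℝ (Fin d)))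
    (hLF : ∀ (x : EuclideanSpace ℝ (Fin d)) (R : ℝ), {y ∈ γ | dist x y < R}.Finite)
    (r : ℝ) (x : EuclideanSpace ℝ (Fin d)) : ℕ :=
  (nbhd γ hLF r x).card

/-- `V̄_x(q) = ∑_{y ∈ γ_{x,r}} V_{xy}(q_x, q_y)`. -/
def Vbar {d : ℕ} (γ : Set (EuclideanSpace ℝ (Fin d)))
    (hLF : ∀ (x : EuclideanSpace ℝ (Fin d)) (R : ℝ), {y ∈ γ | dist x y < R}.Finite)
    (V : EuclideanSpace ℝ (Fin d) → EuclideanSpace ℝ (Fin d) → ℝ → ℝ → ℝ)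
    (r : ℝ) (q : EuclideanSpace ℝ (Fin d) → ℝ) (x : EuclideanSpace ℝ (Fin d)) : ℝ :=
  ∑ y ∈ nbhd γ hLF r x, V x y (q x) (q y)

open Metric MeasureTheory
open scoped ENNReal

/-!
By Cauchy–Schwarz over the `n_{x,r} ≤ a √(1 + |x|)` neighbours of `x` and the bound
`|V_{xy}(s, t)| ≤ C (1 + |s| + |t|)`,
`V̄_x(q)² ≤ 3C² (n_{x,r}² (1 + q_x²) + n_{x,r} ∑_{y ∈ γ_{x,r}} q_y²)`.
After weighting with `e^{-β|x|}`, the terms in `q_y²` are resummed over `x ∈ γ_{y,r}`, where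
`n_{x,r} e^{-β|x|} ≲ √(1 + |y|) e^{-β|y|}`. Every term then carries the weight
`(1 + |x|) e^{-β|x|}`, and `(1 + t) e^{-(β-α)t} ≤ e^{β-α} / (β - α)` trades it for `e^{-α|x|}`
at the cost of the factor `(β - α)⁻¹`. What remains, `∑_{x ∈ γ} (1 + |x|) e^{-α_* |x|}`, is finite:
averaging each term over the ball `B(x, r)` bounds it by
`∫ n_{z,r} (1 + r) e^{α_* r} (1 + |z|) e^{-α_* |z|} dz`.
-/

section Weight

variable {E : Type*} [SeminormedAddCommGroup E]

def expWeight (β : ℝ) (x : E) : ℝ := (1 + ‖x‖) * Real.exp (-β * ‖x‖)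

theorem expWeight_nonneg (β : ℝ) (x : E) : 0 ≤ expWeight β x := by
  unfold expWeight; positivity

theorem expWeight_anti {β β' : ℝ} (h : β ≤ β') (x : E) : expWeight β' x ≤ expWeight β x := by
  unfold expWeight
  gcongr

theorem one_add_pow_mul_exp_neg_le {c t : ℝ} (hc : 0 < c) (ht : 0 ≤ t) (n : ℕ) :
    (1 + t) ^ n * Real.exp (-c * t) ≤ n.factorial * Real.exp c / c ^ n := by
  have h := Real.pow_div_factorial_le_exp (c * (1 + t)) (by positivity) n
  rw [div_le_iff₀ (by positivity)] at h
  rw [le_div_iff₀ (by positivity)]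
  calc (1 + t) ^ n * Real.exp (-c * t) * c ^ n = (c * (1 + t)) ^ n * Real.exp (-c * t) := by
        rw [mul_pow]; ring
    _ ≤ Real.exp (c * (1 + t)) * n.factorial * Real.exp (-c * t) := by gcongr
    _ = n.factorial * Real.exp c := by
      rw [mul_right_comm, ← Real.exp_add]; ring_nf

theorem expWeight_le_mul_exp {α β : ℝ} (hαβ : α < β) (x : E) :
    expWeight β x ≤ Real.exp (β - α) / (β - α) * Real.exp (-α * ‖x‖) := by
  have h := one_add_pow_mul_exp_neg_le (sub_pos.2 hαβ) (norm_nonneg x) 1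
  rw [pow_one, pow_one, Nat.factorial_one, Nat.cast_one, one_mul] at h
  calc expWeight β x = (1 + ‖x‖) * Real.exp (-(β - α) * ‖x‖) * Real.exp (-α * ‖x‖) := by
        rw [expWeight, mul_assoc, ← Real.exp_add]; ring_nf
    _ ≤ _ := by gcongr

theorem one_add_norm_le_of_dist_lt {x y : E} {r : ℝ} (h : dist x y < r) :
    1 + ‖x‖ ≤ (1 + r) * (1 + ‖y‖) := by
  have hr : 0 ≤ r := dist_nonneg.trans h.le
  have := norm_le_norm_add_const_of_dist_le h.le
  nlinarith [norm_nonneg y]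

theorem exp_neg_mul_norm_le_of_dist_lt {x y : E} {r β : ℝ} (hβ : 0 ≤ β) (h : dist x y < r) :
    Real.exp (-β * ‖x‖) ≤ Real.exp (β * r) * Real.exp (-β * ‖y‖) := by
  have := norm_le_norm_add_const_of_dist_le (dist_comm x y ▸ h.le)
  rw [← Real.exp_add]
  gcongr
  nlinarith

end Weight

theorem lintegral_one_add_norm_pow_mul_exp_lt_top {E : Type*} [NormedAddCommGroup E]
    [NormedSpace ℝ E] [FiniteDimensional ℝ E] [MeasurableSpace E] [BorelSpace E]
    (μ : Measure E) [μ.IsAddHaarMeasure] (n : ℕ) {c : ℝ} (hc : 0 < c) :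
    ∫⁻ z, ENNReal.ofReal ((1 + ‖z‖) ^ n * Real.exp (-c * ‖z‖)) ∂μ < ∞ := by
  set k := Module.finrank ℝ E + 1
  set K : ℝ := (n + k).factorial * Real.exp c / c ^ (n + k)
  have hbound (z : E) : (1 + ‖z‖) ^ n * Real.exp (-c * ‖z‖) ≤ K * (1 + ‖z‖) ^ (-(k : ℝ)) := by
    have h1 : 0 < 1 + ‖z‖ := by positivity
    rw [Real.rpow_neg h1.le, Real.rpow_natCast, ← div_eq_mul_inv, le_div_iff₀ (by positivity)]
    calc (1 + ‖z‖) ^ n * Real.exp (-c * ‖z‖) * (1 + ‖z‖) ^ k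
        = (1 + ‖z‖) ^ (n + k) * Real.exp (-c * ‖z‖) := by ring
      _ ≤ K := one_add_pow_mul_exp_neg_le hc (norm_nonneg z) _
  calc ∫⁻ z, ENNReal.ofReal ((1 + ‖z‖) ^ n * Real.exp (-c * ‖z‖)) ∂μ
      ≤ ∫⁻ z, ENNReal.ofReal K * ENNReal.ofReal ((1 + ‖z‖) ^ (-(k : ℝ))) ∂μ := by
        refine lintegral_mono fun z => ?_
        rw [← ENNReal.ofReal_mul (by positivity)]
        exact ENNReal.ofReal_le_ofReal (hbound z)
    _ = ENNReal.ofReal K * ∫⁻ z, ENNReal.ofReal ((1 + ‖z‖) ^ (-(k : ℝ))) ∂μ :=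
        lintegral_const_mul' _ _ ENNReal.ofReal_ne_top
    _ < ∞ := ENNReal.mul_lt_top ENNReal.ofReal_lt_top
        (finite_integral_one_add_norm (by push_cast [k]; linarith))

theorem summable_of_tsum_ofReal_ne_top {ι : Type*} {f : ι → ℝ} (hf : ∀ i, 0 ≤ f i)
    (h : ∑' i, ENNReal.ofReal (f i) ≠ ∞) : Summable f :=
  (ENNReal.summable_toReal h).congr fun i => ENNReal.toReal_ofReal (hf i)

theorem sq_le_of_lipschitz {f : ℝ → ℝ → ℝ} {C : ℝ}
    (hlip : ∀ s t s' t' : ℝ, |f s t - f s' t'| ≤ C * (|s - s'| + |t - t'|)) (h0 : |f 0 0| ≤ C)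
    (s t : ℝ) : f s t ^ 2 ≤ 3 * C ^ 2 * (1 + s ^ 2 + t ^ 2) := by
  have habs : |f s t| ≤ C * (1 + |s| + |t|) := by
    have h1 := hlip s t 0 0
    have h2 := abs_sub_abs_le_abs_sub (f s t) (f 0 0)
    simp only [sub_zero] at h1
    linarith
  have hsq : (1 + |s| + |t|) ^ 2 ≤ 3 * (1 + |s| ^ 2 + |t| ^ 2) := by
    nlinarith [sq_nonneg (1 - |s|), sq_nonneg (1 - |t|), sq_nonneg (|s| - |t|)]
  calc f s t ^ 2 = |f s t| ^ 2 := (sq_abs _).symm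
    _ ≤ (C * (1 + |s| + |t|)) ^ 2 := by gcongr
    _ = C ^ 2 * (1 + |s| + |t|) ^ 2 := by ring
    _ ≤ C ^ 2 * (3 * (1 + |s| ^ 2 + |t| ^ 2)) := by gcongr
    _ = 3 * C ^ 2 * (1 + s ^ 2 + t ^ 2) := by rw [sq_abs, sq_abs]; ring

theorem summable_expWeight_mul_sq_and_tsum_le {E : Type*} [SeminormedAddCommGroup E] {s : Set E}
    {α β : ℝ} (hαβ : α < β) {q : E → ℝ}
    (hq : Summable fun x : s => q x ^ 2 * Real.exp (-α * ‖(x : E)‖)) :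
    Summable (fun x : s => expWeight β (x : E) * q x ^ 2) ∧
      ∑' x : s, expWeight β (x : E) * q x ^ 2
        ≤ Real.exp (β - α) / (β - α) * ∑' x : s, q x ^ 2 * Real.exp (-α * ‖(x : E)‖) := by
  have hle (x : s) : expWeight β (x : E) * q x ^ 2
      ≤ Real.exp (β - α) / (β - α) * (q x ^ 2 * Real.exp (-α * ‖(x : E)‖)) := by
    calc _ ≤ Real.exp (β - α) / (β - α) * Real.exp (-α * ‖(x : E)‖) * q x ^ 2 := by
          gcongr
          exact expWeight_le_mul_exp hαβ _
      _ = _ := by ring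
  have hs : Summable fun x : s => expWeight β (x : E) * q x ^ 2 :=
    .of_nonneg_of_le (fun x => mul_nonneg (expWeight_nonneg _ _) (sq_nonneg _)) hle
      (hq.mul_left _)
  exact ⟨hs, (Summable.tsum_le_tsum hle hs (hq.mul_left _)).trans_eq tsum_mul_left⟩

theorem add_mul_div_le_mul_div_one_add_sqrt_sq {A B Q ε c : ℝ} (hA : 0 ≤ A) (hB : 0 ≤ B)
    (hQ : 0 ≤ Q) (hε : 0 < ε) (hεc : ε ≤ c) :
    A + B / ε * Q ≤ (c * A + B) / ε * (1 + Real.sqrt Q) ^ 2 := by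
  have hP1 : 1 ≤ (1 + Real.sqrt Q) ^ 2 := by nlinarith [Real.sqrt_nonneg Q]
  have hPQ : Q ≤ (1 + Real.sqrt Q) ^ 2 := by nlinarith [Real.sqrt_nonneg Q, Real.sq_sqrt hQ]
  have hcε : 1 ≤ c / ε := (one_le_div hε).2 hεc
  calc A + B / ε * Q ≤ A * (c / ε * (1 + Real.sqrt Q) ^ 2) + B / ε * (1 + Real.sqrt Q) ^ 2 := by
        gcongr ?_ + B / ε * ?_
        exact le_mul_of_one_le_right hA (one_le_mul_of_one_le_of_one_le hcε hP1)
    _ = _ := by ring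

section LocallyFinite

variable {d : ℕ} {γ : Set (EuclideanSpace ℝ (Fin d))}
  {hLF : ∀ (x : EuclideanSpace ℝ (Fin d)) (R : ℝ), {y ∈ γ | dist x y < R}.Finite} {r a : ℝ}

theorem coe_nbhd (x : EuclideanSpace ℝ (Fin d)) :
    (nbhd γ hLF r x : Set (EuclideanSpace ℝ (Fin d))) = γ ∩ ball x r := by
  ext y
  simp [nbhd, dist_comm]

theorem mem_nbhd {x y : EuclideanSpace ℝ (Fin d)} :
    y ∈ nbhd γ hLF r x ↔ y ∈ γ ∧ y ∈ ball x r := by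
  rw [← Finset.mem_coe, coe_nbhd]
  rfl

theorem sum_nbhd_eq_tsum_indicator {M : Type*} [AddCommMonoid M] [TopologicalSpace M]
    (F : EuclideanSpace ℝ (Fin d) → M) (x : EuclideanSpace ℝ (Fin d)) :
    ∑ y ∈ nbhd γ hLF r x, F y = ∑' y : γ, (ball x r).indicator F y := by
  rw [sum_eq_tsum_indicator, coe_nbhd, ← Set.indicator_indicator, tsum_subtype]

theorem tsum_sum_nbhd_comm (F : EuclideanSpace ℝ (Fin d) → EuclideanSpace ℝ (Fin d) → ℝ≥0∞) :
    ∑' x : γ, ∑ y ∈ nbhd γ hLF r x, F x y = ∑' y : γ, ∑ x ∈ nbhd γ hLF r y, F x y := by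
  simp only [sum_nbhd_eq_tsum_indicator]
  rw [ENNReal.tsum_comm]
  refine tsum_congr fun y => tsum_congr fun x => ?_
  classical
  simp only [Set.indicator]
  exact if_congr mem_ball_comm rfl rfl

theorem summable_sum_nbhd_and_tsum_comm
    {F : EuclideanSpace ℝ (Fin d) → EuclideanSpace ℝ (Fin d) → ℝ} (hF : ∀ x y, 0 ≤ F x y)
    (hs : Summable fun y : γ => ∑ x ∈ nbhd γ hLF r y, F x y) :
    Summable (fun x : γ => ∑ y ∈ nbhd γ hLF r x, F x y) ∧
      ∑' x : γ, ∑ y ∈ nbhd γ hLF r x, F x y = ∑' y : γ, ∑ x ∈ nbhd γ hLF r y, F x y := by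
  have hu (x : γ) : 0 ≤ ∑ y ∈ nbhd γ hLF r x, F x y := Finset.sum_nonneg fun _ _ => hF _ _
  have hv (y : γ) : 0 ≤ ∑ x ∈ nbhd γ hLF r y, F x y := Finset.sum_nonneg fun _ _ => hF _ _
  have key : ∑' x : γ, ENNReal.ofReal (∑ y ∈ nbhd γ hLF r x, F x y)
      = ENNReal.ofReal (∑' y : γ, ∑ x ∈ nbhd γ hLF r y, F x y) := by
    rw [ENNReal.ofReal_tsum_of_nonneg hv hs]
    simp only [ENNReal.ofReal_sum_of_nonneg fun _ _ => hF _ _]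
    exact tsum_sum_nbhd_comm fun x y => ENNReal.ofReal (F x y)
  have hsum := summable_of_tsum_ofReal_ne_top hu (key ▸ ENNReal.ofReal_ne_top)
  rw [← ENNReal.ofReal_tsum_of_nonneg hu hsum] at key
  exact ⟨hsum, (ENNReal.ofReal_eq_ofReal_iff (tsum_nonneg hu) (tsum_nonneg hv)).1 key⟩

theorem tsum_indicator_ball_eq_npts (G : EuclideanSpace ℝ (Fin d) → ℝ≥0∞)
    (z : EuclideanSpace ℝ (Fin d)) :
    ∑' x : γ, (ball (x : EuclideanSpace ℝ (Fin d)) r).indicator G z = npts γ hLF r z * G z := by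
  have h := sum_nbhd_eq_tsum_indicator (γ := γ) (hLF := hLF) (r := r) (fun _ => G z) z
  rw [Finset.sum_const, nsmul_eq_mul] at h
  rw [npts, h]
  refine tsum_congr fun x => ?_
  classical
  simp only [Set.indicator]
  exact if_congr mem_ball_comm rfl rfl

theorem tsum_mul_volume_ball_le [Countable γ] {g G : EuclideanSpace ℝ (Fin d) → ℝ≥0∞}
    (hG : Measurable G) (hgG : ∀ x ∈ γ, ∀ z ∈ ball x r, g x ≤ G z) :
    (∑' x : γ, g x) * volume (ball (0 : EuclideanSpace ℝ (Fin d)) r)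
      ≤ ∫⁻ z, npts γ hLF r z * G z := by
  rw [← ENNReal.tsum_mul_right]
  calc ∑' x : γ, g x * volume (ball (0 : EuclideanSpace ℝ (Fin d)) r)
      = ∑' x : γ, ∫⁻ _ in ball (x : EuclideanSpace ℝ (Fin d)) r, g x := by
        simp only [setLIntegral_const, Measure.addHaar_ball_center]
    _ ≤ ∑' x : γ, ∫⁻ z, (ball (x : EuclideanSpace ℝ (Fin d)) r).indicator G z := by
        refine ENNReal.tsum_le_tsum fun x => ?_
        rw [lintegral_indicator measurableSet_ball]
        exact setLIntegral_mono hG (hgG x x.2)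
    _ = ∫⁻ z, ∑' x : γ, (ball (x : EuclideanSpace ℝ (Fin d)) r).indicator G z :=
        (lintegral_tsum fun x => (hG.indicator measurableSet_ball).aemeasurable).symm
    _ = ∫⁻ z, npts γ hLF r z * G z := lintegral_congr fun z => tsum_indicator_ball_eq_npts G z

theorem npts_sq_le
    (hden : ∀ x : EuclideanSpace ℝ (Fin d), (npts γ hLF r x : ℝ) ≤ a * Real.sqrt (1 + ‖x‖))
    (x : EuclideanSpace ℝ (Fin d)) :
    (npts γ hLF r x : ℝ) ^ 2 ≤ a ^ 2 * (1 + ‖x‖) := by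
  calc (npts γ hLF r x : ℝ) ^ 2 ≤ (a * Real.sqrt (1 + ‖x‖)) ^ 2 := by gcongr; exact hden x
    _ = a ^ 2 * (1 + ‖x‖) := by rw [mul_pow, Real.sq_sqrt (by positivity)]

theorem npts_mul_exp_le_of_dist_lt
    (hden : ∀ x : EuclideanSpace ℝ (Fin d), (npts γ hLF r x : ℝ) ≤ a * Real.sqrt (1 + ‖x‖))
    (ha : 0 ≤ a) {β : ℝ} (hβ : 0 ≤ β)
    {x y : EuclideanSpace ℝ (Fin d)} (hxy : dist x y < r) :
    npts γ hLF r x * Real.exp (-β * ‖x‖)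
      ≤ a * Real.sqrt (1 + r) * Real.exp (β * r) * (Real.sqrt (1 + ‖y‖) * Real.exp (-β * ‖y‖)) := by
  have hr : 0 ≤ r := dist_nonneg.trans hxy.le
  have hsqrt : Real.sqrt (1 + ‖x‖) ≤ Real.sqrt (1 + r) * Real.sqrt (1 + ‖y‖) := by
    rw [← Real.sqrt_mul (by positivity)]
    exact Real.sqrt_le_sqrt (one_add_norm_le_of_dist_lt hxy)
  calc npts γ hLF r x * Real.exp (-β * ‖x‖)
      ≤ (a * (Real.sqrt (1 + r) * Real.sqrt (1 + ‖y‖)))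
          * (Real.exp (β * r) * Real.exp (-β * ‖y‖)) := by
        gcongr
        · exact (hden x).trans (by gcongr)
        · exact exp_neg_mul_norm_le_of_dist_lt hβ hxy
    _ = _ := by ring

theorem sum_nbhd_npts_mul_exp_le
    (hden : ∀ x : EuclideanSpace ℝ (Fin d), (npts γ hLF r x : ℝ) ≤ a * Real.sqrt (1 + ‖x‖))
    (ha : 0 ≤ a) {β : ℝ} (hβ : 0 ≤ β) (y : EuclideanSpace ℝ (Fin d)) :
    ∑ x ∈ nbhd γ hLF r y, npts γ hLF r x * Real.exp (-β * ‖x‖)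
      ≤ a ^ 2 * Real.sqrt (1 + r) * Real.exp (β * r) * expWeight β y := by
  set M := a * Real.sqrt (1 + r) * Real.exp (β * r) * (Real.sqrt (1 + ‖y‖) * Real.exp (-β * ‖y‖))
  have hterm : ∀ x ∈ nbhd γ hLF r y, npts γ hLF r x * Real.exp (-β * ‖x‖) ≤ M := fun x hx =>
    npts_mul_exp_le_of_dist_lt hden ha hβ (mem_nbhd.1 hx).2
  calc ∑ x ∈ nbhd γ hLF r y, npts γ hLF r x * Real.exp (-β * ‖x‖)
      ≤ npts γ hLF r y * M := by
        simpa [npts] using Finset.sum_le_card_nsmul _ _ M hterm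
    _ ≤ a * Real.sqrt (1 + ‖y‖) * M := by gcongr; exact hden y
    _ = a ^ 2 * Real.sqrt (1 + r) * Real.exp (β * r) * expWeight β y := by
        rw [expWeight]
        linear_combination a ^ 2 * Real.sqrt (1 + r) * Real.exp (β * r) * Real.exp (-β * ‖y‖)
          * Real.mul_self_sqrt (by positivity : (0 : ℝ) ≤ 1 + ‖y‖)

theorem summable_expWeight [Countable γ]
    (hden : ∀ x : EuclideanSpace ℝ (Fin d), (npts γ hLF r x : ℝ) ≤ a * Real.sqrt (1 + ‖x‖))
    (hr : 0 < r) (ha : 0 ≤ a) {c : ℝ} (hc : 0 < c) :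
    Summable fun x : γ => expWeight c (x : EuclideanSpace ℝ (Fin d)) := by
  set K := (1 + r) * Real.exp (c * r)
  set G : EuclideanSpace ℝ (Fin d) → ℝ≥0∞ := fun z => ENNReal.ofReal (K * expWeight c z)
  have hG : Measurable G := by
    refine ENNReal.measurable_ofReal.comp (measurable_const.mul ?_)
    unfold expWeight
    fun_prop
  have hgG : ∀ x ∈ γ, ∀ z ∈ ball x r, ENNReal.ofReal (expWeight c x) ≤ G z := by
    intro x _ z hz
    have hxz : dist x z < r := by rw [dist_comm]; exact hz
    refine ENNReal.ofReal_le_ofReal ?_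
    calc expWeight c x ≤ ((1 + r) * (1 + ‖z‖)) * (Real.exp (c * r) * Real.exp (-c * ‖z‖)) :=
          mul_le_mul (one_add_norm_le_of_dist_lt hxz)
            (exp_neg_mul_norm_le_of_dist_lt hc.le hxz) (by positivity) (by positivity)
      _ = K * expWeight c z := by rw [expWeight]; ring
  have hnpts (z : EuclideanSpace ℝ (Fin d)) :
      (npts γ hLF r z : ℝ≥0∞) ≤ ENNReal.ofReal (a * (1 + ‖z‖)) := by
    rw [← ENNReal.ofReal_natCast]
    refine ENNReal.ofReal_le_ofReal ((hden z).trans ?_)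
    gcongr
    exact Real.sqrt_le_self_iff.2 (Or.inr (by simp))
  have hint : ∫⁻ z, npts γ hLF r z * G z < ∞ := by
    calc ∫⁻ z, npts γ hLF r z * G z
        ≤ ∫⁻ z, ENNReal.ofReal (a * K) * ENNReal.ofReal ((1 + ‖z‖) ^ 2 * Real.exp (-c * ‖z‖)) := by
          refine lintegral_mono fun z => ?_
          calc (npts γ hLF r z : ℝ≥0∞) * G z ≤ ENNReal.ofReal (a * (1 + ‖z‖)) * G z := by
                gcongr
                exact hnpts z
            _ = _ := by
                rw [← ENNReal.ofReal_mul (by positivity), ← ENNReal.ofReal_mul (by positivity)]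
                congr 1
                rw [expWeight]
                ring
      _ < ∞ := by
          rw [lintegral_const_mul' _ _ ENNReal.ofReal_ne_top]
          exact ENNReal.mul_lt_top ENNReal.ofReal_lt_top
            (lintegral_one_add_norm_pow_mul_exp_lt_top volume 2 hc)
  have hvol : volume (ball (0 : EuclideanSpace ℝ (Fin d)) r) ≠ 0 :=
    (measure_ball_pos volume _ hr).ne'
  refine summable_of_tsum_ofReal_ne_top (fun x => expWeight_nonneg c _) ?_
  exact (ENNReal.lt_top_of_mul_ne_top_left
    ((tsum_mul_volume_ball_le hG hgG).trans_lt hint).ne hvol).ne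

theorem sq_Vbar_le {V : EuclideanSpace ℝ (Fin d) → EuclideanSpace ℝ (Fin d) → ℝ → ℝ → ℝ} {C : ℝ}
    (hlip : ∀ x ∈ γ, ∀ y ∈ γ, ∀ q1 q2 q1' q2' : ℝ,
      |V x y q1 q2 - V x y q1' q2'| ≤ C * (|q1 - q1'| + |q2 - q2'|))
    (hV0 : ∀ x ∈ γ, ∀ y ∈ γ, |V x y 0 0| ≤ C)
    (q : EuclideanSpace ℝ (Fin d) → ℝ) {x : EuclideanSpace ℝ (Fin d)} (hx : x ∈ γ) :
    Vbar γ hLF V r q x ^ 2 ≤ 3 * C ^ 2 * ((npts γ hLF r x : ℝ) ^ 2 * (1 + q x ^ 2)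
      + npts γ hLF r x * ∑ y ∈ nbhd γ hLF r x, q y ^ 2) := by
  calc Vbar γ hLF V r q x ^ 2
      ≤ npts γ hLF r x * ∑ y ∈ nbhd γ hLF r x, V x y (q x) (q y) ^ 2 :=
        sq_sum_le_card_mul_sum_sq
    _ ≤ npts γ hLF r x * ∑ y ∈ nbhd γ hLF r x, 3 * C ^ 2 * (1 + q x ^ 2 + q y ^ 2) := by
        gcongr with y hy
        have hyγ := (mem_nbhd.1 hy).1
        exact sq_le_of_lipschitz (hlip x hx y hyγ) (hV0 x hx y hyγ) _ _
    _ = _ := by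
        simp only [← Finset.mul_sum, Finset.sum_add_distrib, Finset.sum_const, nsmul_eq_mul, npts]
        ring

theorem sq_Vbar_mul_exp_le
    (hden : ∀ x : EuclideanSpace ℝ (Fin d), (npts γ hLF r x : ℝ) ≤ a * Real.sqrt (1 + ‖x‖))
    {V : EuclideanSpace ℝ (Fin d) → EuclideanSpace ℝ (Fin d) → ℝ → ℝ → ℝ} {C : ℝ}
    (hlip : ∀ x ∈ γ, ∀ y ∈ γ, ∀ q1 q2 q1' q2' : ℝ,
      |V x y q1 q2 - V x y q1' q2'| ≤ C * (|q1 - q1'| + |q2 - q2'|))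
    (hV0 : ∀ x ∈ γ, ∀ y ∈ γ, |V x y 0 0| ≤ C)
    (β : ℝ) (q : EuclideanSpace ℝ (Fin d) → ℝ) {x : EuclideanSpace ℝ (Fin d)} (hx : x ∈ γ) :
    Vbar γ hLF V r q x ^ 2 * Real.exp (-β * ‖x‖)
      ≤ 3 * C ^ 2 * (a ^ 2 * expWeight β x + a ^ 2 * (expWeight β x * q x ^ 2)
        + ∑ y ∈ nbhd γ hLF r x, npts γ hLF r x * Real.exp (-β * ‖x‖) * q y ^ 2) := by
  calc _ ≤ 3 * C ^ 2 * ((npts γ hLF r x : ℝ) ^ 2 * (1 + q x ^ 2)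
        + npts γ hLF r x * ∑ y ∈ nbhd γ hLF r x, q y ^ 2) * Real.exp (-β * ‖x‖) := by
        gcongr
        exact sq_Vbar_le hlip hV0 q hx
    _ = 3 * C ^ 2 * ((npts γ hLF r x : ℝ) ^ 2 * Real.exp (-β * ‖x‖) * (1 + q x ^ 2)
        + ∑ y ∈ nbhd γ hLF r x, npts γ hLF r x * Real.exp (-β * ‖x‖) * q y ^ 2) := by
        simp only [← Finset.mul_sum]
        ring
    _ ≤ 3 * C ^ 2 * (a ^ 2 * (1 + ‖x‖) * Real.exp (-β * ‖x‖) * (1 + q x ^ 2)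
        + ∑ y ∈ nbhd γ hLF r x, npts γ hLF r x * Real.exp (-β * ‖x‖) * q y ^ 2) := by
        gcongr
        exact npts_sq_le hden x
    _ = _ := by rw [expWeight]; ring

theorem summable_sum_nbhd_npts_mul_exp_mul_sq_and_tsum_le
    (hden : ∀ x : EuclideanSpace ℝ (Fin d), (npts γ hLF r x : ℝ) ≤ a * Real.sqrt (1 + ‖x‖))
    (ha : 0 ≤ a) {β : ℝ} (hβ : 0 ≤ β) (q : EuclideanSpace ℝ (Fin d) → ℝ)
    (hwq : Summable fun x : γ => expWeight β (x : EuclideanSpace ℝ (Fin d)) * q x ^ 2) :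
    Summable (fun x : γ => ∑ y ∈ nbhd γ hLF r x,
        npts γ hLF r x * Real.exp (-β * ‖(x : EuclideanSpace ℝ (Fin d))‖) * q y ^ 2) ∧
      ∑' x : γ, ∑ y ∈ nbhd γ hLF r x,
          npts γ hLF r x * Real.exp (-β * ‖(x : EuclideanSpace ℝ (Fin d))‖) * q y ^ 2
        ≤ a ^ 2 * Real.sqrt (1 + r) * Real.exp (β * r)
          * ∑' x : γ, expWeight β (x : EuclideanSpace ℝ (Fin d)) * q x ^ 2 := by
  set K := a ^ 2 * Real.sqrt (1 + r) * Real.exp (β * r)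
  set F : EuclideanSpace ℝ (Fin d) → EuclideanSpace ℝ (Fin d) → ℝ :=
    fun x y => npts γ hLF r x * Real.exp (-β * ‖x‖) * q y ^ 2
  have hF : ∀ x y, 0 ≤ F x y := fun x y => by positivity
  have hswap (y : EuclideanSpace ℝ (Fin d)) :
      ∑ x ∈ nbhd γ hLF r y, F x y ≤ K * (expWeight β y * q y ^ 2) := by
    rw [← Finset.sum_mul, ← mul_assoc]
    gcongr
    exact sum_nbhd_npts_mul_exp_le hden ha hβ y
  have hs : Summable fun y : γ => ∑ x ∈ nbhd γ hLF r y, F x y :=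
    .of_nonneg_of_le (fun y => Finset.sum_nonneg fun x _ => hF x y) (fun y => hswap y)
      (hwq.mul_left K)
  obtain ⟨hsum, heq⟩ := summable_sum_nbhd_and_tsum_comm hF hs
  refine ⟨hsum, heq.trans_le ?_⟩
  exact (Summable.tsum_le_tsum (fun y : γ => hswap y) hs (hwq.mul_left K)).trans_eq tsum_mul_left

theorem summable_sq_Vbar_mul_exp_and_tsum_le
    (hden : ∀ x : EuclideanSpace ℝ (Fin d), (npts γ hLF r x : ℝ) ≤ a * Real.sqrt (1 + ‖x‖))
    (ha : 0 ≤ a)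
    {V : EuclideanSpace ℝ (Fin d) → EuclideanSpace ℝ (Fin d) → ℝ → ℝ → ℝ} {C : ℝ}
    (hlip : ∀ x ∈ γ, ∀ y ∈ γ, ∀ q1 q2 q1' q2' : ℝ,
      |V x y q1 q2 - V x y q1' q2'| ≤ C * (|q1 - q1'| + |q2 - q2'|))
    (hV0 : ∀ x ∈ γ, ∀ y ∈ γ, |V x y 0 0| ≤ C)
    {β : ℝ} (hβ : 0 ≤ β) (q : EuclideanSpace ℝ (Fin d) → ℝ)
    (hw : Summable fun x : γ => expWeight β (x : EuclideanSpace ℝ (Fin d)))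
    (hwq : Summable fun x : γ => expWeight β (x : EuclideanSpace ℝ (Fin d)) * q x ^ 2) :
    Summable (fun x : γ =>
        Vbar γ hLF V r q x ^ 2 * Real.exp (-β * ‖(x : EuclideanSpace ℝ (Fin d))‖)) ∧
      ∑' x : γ, Vbar γ hLF V r q x ^ 2 * Real.exp (-β * ‖(x : EuclideanSpace ℝ (Fin d))‖)
        ≤ 3 * C ^ 2 * (a ^ 2 * ∑' x : γ, expWeight β (x : EuclideanSpace ℝ (Fin d))
          + a ^ 2 * (1 + Real.sqrt (1 + r) * Real.exp (β * r))
            * ∑' x : γ, expWeight β (x : EuclideanSpace ℝ (Fin d)) * q x ^ 2) := by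
  obtain ⟨hD, hD_le⟩ := summable_sum_nbhd_npts_mul_exp_mul_sq_and_tsum_le hden ha hβ q hwq
  have hpt (x : γ) := sq_Vbar_mul_exp_le hden hlip hV0 β q x.2
  have hsum := (((hw.mul_left (a ^ 2)).add (hwq.mul_left (a ^ 2))).add hD).mul_left (3 * C ^ 2)
  have hf := Summable.of_nonneg_of_le (fun x => by positivity) hpt hsum
  refine ⟨hf, (Summable.tsum_le_tsum hpt hf hsum).trans ?_⟩
  rw [tsum_mul_left, Summable.tsum_add ((hw.mul_left _).add (hwq.mul_left _)) hD,
    Summable.tsum_add (hw.mul_left _) (hwq.mul_left _), tsum_mul_left, tsum_mul_left]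
  calc _ ≤ 3 * C ^ 2 * (a ^ 2 * ∑' x : γ, expWeight β (x : EuclideanSpace ℝ (Fin d))
        + a ^ 2 * ∑' x : γ, expWeight β (x : EuclideanSpace ℝ (Fin d)) * q x ^ 2
        + a ^ 2 * Real.sqrt (1 + r) * Real.exp (β * r)
          * ∑' x : γ, expWeight β (x : EuclideanSpace ℝ (Fin d)) * q x ^ 2) := by gcongr
    _ = _ := by ring

end LocallyFinite

theorem statement0_general {d : ℕ} (γ : Set (EuclideanSpace ℝ (Fin d)))
    (hcount : γ.Countable)
    (hLF : ∀ (x : EuclideanSpace ℝ (Fin d)) (R : ℝ), {y ∈ γ | dist x y < R}.Finite)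
    (r a : ℝ) (hr : 0 < r) (ha : 0 < a)
    (hden : ∀ x : EuclideanSpace ℝ (Fin d),
      (npts γ hLF r x : ℝ) ≤ a * Real.sqrt (1 + ‖x‖))
    (V : EuclideanSpace ℝ (Fin d) → EuclideanSpace ℝ (Fin d) → ℝ → ℝ → ℝ)
    (C : ℝ) (hC : 0 < C)
    (hlip : ∀ x ∈ γ, ∀ y ∈ γ, ∀ q1 q2 q1' q2' : ℝ,
      |V x y q1 q2 - V x y q1' q2'| ≤ C * (|q1 - q1'| + |q2 - q2'|))
    (hV0 : ∀ x ∈ γ, ∀ y ∈ γ, |V x y 0 0| ≤ C)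
    (αs αS : ℝ) (h0 : 0 < αs) (hss : αs < αS) :
    ∃ L > (0 : ℝ), ∀ α β : ℝ, αs ≤ α → α < β → β ≤ αS →
      ∀ q : EuclideanSpace ℝ (Fin d) → ℝ,
      Summable (fun y : γ => (q y) ^ 2 * Real.exp (-α * ‖(y : EuclideanSpace ℝ (Fin d))‖)) →
      Summable (fun x : γ =>
          (Vbar γ hLF V r q x) ^ 2 * Real.exp (-β * ‖(x : EuclideanSpace ℝ (Fin d))‖)) ∧
      ∑' x : γ, (Vbar γ hLF V r q x) ^ 2 * Real.exp (-β * ‖(x : EuclideanSpace ℝ (Fin d))‖)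
        ≤ L ^ 2 * (β - α)⁻¹ *
          (1 + Real.sqrt (∑' y : γ,
            (q y) ^ 2 * Real.exp (-α * ‖(y : EuclideanSpace ℝ (Fin d))‖))) ^ 2 := by
  have : Countable γ := hcount.to_subtype
  have hW := summable_expWeight hden hr ha.le h0
  set W := ∑' x : γ, expWeight αs (x : EuclideanSpace ℝ (Fin d))
  have hW0 : 0 ≤ W := tsum_nonneg fun x => expWeight_nonneg _ _
  have hαS : 0 < αS := h0.trans hss
  set B := a ^ 2 * (1 + Real.sqrt (1 + r) * Real.exp (αS * r)) * Real.exp αS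
  refine ⟨Real.sqrt (3 * C ^ 2 * (αS * (a ^ 2 * W) + B)), Real.sqrt_pos.2 (by positivity),
    fun α β hα hαβ hβ q hq => ?_⟩
  have hw_le (x : γ) := expWeight_anti (hα.trans hαβ.le) (x : EuclideanSpace ℝ (Fin d))
  have hw := hW.of_nonneg_of_le (fun x => expWeight_nonneg _ _) hw_le
  obtain ⟨hwq, hwq_le⟩ := summable_expWeight_mul_sq_and_tsum_le hαβ hq
  obtain ⟨hs, hle⟩ := summable_sq_Vbar_mul_exp_and_tsum_le hden ha.le hlip hV0
    (by linarith) q hw hwq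
  refine ⟨hs, hle.trans ?_⟩
  set Q := ∑' y : γ, q y ^ 2 * Real.exp (-α * ‖(y : EuclideanSpace ℝ (Fin d))‖)
  have hQ : 0 ≤ Q := tsum_nonneg fun y => by positivity
  have hw_tsum := Summable.tsum_le_tsum hw_le hw hW
  have hwq_tsum : ∑' x : γ, expWeight β (x : EuclideanSpace ℝ (Fin d)) * q x ^ 2
      ≤ Real.exp αS / (β - α) * Q := hwq_le.trans (by gcongr; linarith)
  have hwq0 : 0 ≤ ∑' x : γ, expWeight β (x : EuclideanSpace ℝ (Fin d)) * q x ^ 2 :=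
    tsum_nonneg fun x => mul_nonneg (expWeight_nonneg _ _) (sq_nonneg _)
  rw [Real.sq_sqrt (by positivity)]
  calc _ ≤ 3 * C ^ 2 * (a ^ 2 * W + a ^ 2 * (1 + Real.sqrt (1 + r) * Real.exp (αS * r))
        * (Real.exp αS / (β - α) * Q)) := by gcongr
    _ = 3 * C ^ 2 * (a ^ 2 * W + B / (β - α) * Q) := by ring
    _ ≤ 3 * C ^ 2 * ((αS * (a ^ 2 * W) + B) / (β - α) * (1 + Real.sqrt Q) ^ 2) := by
        gcongr
        exact add_mul_div_le_mul_div_one_add_sqrt_sq (by positivity) (by positivity) hQ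
          (sub_pos.2 hαβ) (by linarith)
    _ = _ := by ring

theorem statement0 {d : ℕ} (hd : 1 ≤ d) (γ : Set (EuclideanSpace ℝ (Fin d)))
    (hcount : γ.Countable)
    (hLF : ∀ (x : EuclideanSpace ℝ (Fin d)) (R : ℝ), {y ∈ γ | dist x y < R}.Finite)
    (r a : ℝ) (hr : 0 < r) (ha : 0 < a)
    (hden : ∀ x : EuclideanSpace ℝ (Fin d),
      (npts γ hLF r x : ℝ) ≤ a * Real.sqrt (1 + ‖x‖))
    (V : EuclideanSpace ℝ (Fin d) → EuclideanSpace ℝ (Fin d) → ℝ → ℝ → ℝ)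
    (C : ℝ) (hC : 0 < C)
    (hrange : ∀ x ∈ γ, ∀ y ∈ γ, r ≤ dist x y → ∀ s t : ℝ, V x y s t = 0)
    (hlip : ∀ x ∈ γ, ∀ y ∈ γ, ∀ q1 q2 q1' q2' : ℝ,
      |V x y q1 q2 - V x y q1' q2'| ≤ C * (|q1 - q1'| + |q2 - q2'|))
    (hV0 : ∀ x ∈ γ, ∀ y ∈ γ, |V x y 0 0| ≤ C)
    (αs αS : ℝ) (h0 : 0 < αs) (hss : αs < αS) :
    ∃ L > (0 : ℝ), ∀ α β : ℝ, αs ≤ α → α < β → β ≤ αS →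
      ∀ q : EuclideanSpace ℝ (Fin d) → ℝ,
      Summable (fun y : γ => (q y) ^ 2 * Real.exp (-α * ‖(y : EuclideanSpace ℝ (Fin d))‖)) →
      Summable (fun x : γ =>
          (Vbar γ hLF V r q x) ^ 2 * Real.exp (-β * ‖(x : EuclideanSpace ℝ (Fin d))‖)) ∧
      ∑' x : γ, (Vbar γ hLF V r q x) ^ 2 * Real.exp (-β * ‖(x : EuclideanSpace ℝ (Fin d))‖)
        ≤ L ^ 2 * (β - α)⁻¹ *
          (1 + Real.sqrt (∑' y : γ,
            (q y) ^ 2 * Real.exp (-α * ‖(y : EuclideanSpace ℝ (Fin d))‖))) ^ 2 :=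
  statement0_general γ hcount hLF r a hr ha hden V C hC hlip hV0 αs αS h0 hss

end
end

section
/- Let b > 0, β̂ > 0 and 0 ≤ t < b β̂. Then 2 ∫₀^t (β̂ − s/b)^{−2} (β̂ + s/b) ds ≤ 4 b (1 − t/(b β̂))^{−1}. -/
theorem statement9 (b βh t : ℝ) (hb : 0 < b) (hβ : 0 < βh)
    (ht0 : 0 ≤ t) (ht : t < b * βh) :
    2 * ∫ s in (0:ℝ)..t, ((βh - s / b) ^ 2)⁻¹ * (βh + s / b) ≤
      4 * b * (1 - t / (b * βh))⁻¹ := by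
  have hc : 0 < βh - t / b := by
    rw [sub_pos, div_lt_iff₀ hb]; linarith
  have hpos : ∀ s ∈ Set.Icc (0:ℝ) t, 0 < βh - s / b := by
    intro s hs
    have h1 : s / b ≤ t / b := by gcongr; exact hs.2
    linarith
  have hcontf : ContinuousOn (fun s : ℝ => ((βh - s / b) ^ 2)⁻¹ * (βh + s / b))
      (Set.Icc 0 t) := by
    apply ContinuousOn.mul
    · apply ContinuousOn.inv₀
      · fun_prop
      · intro s hs
        exact pow_ne_zero _ (ne_of_gt (hpos s hs))
    · fun_prop
  have hcontg : ContinuousOn (fun s : ℝ => 2 * βh * ((βh - s / b) ^ 2)⁻¹)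
      (Set.Icc 0 t) := by
    apply ContinuousOn.mul continuousOn_const
    apply ContinuousOn.inv₀
    · fun_prop
    · intro s hs
      exact pow_ne_zero _ (ne_of_gt (hpos s hs))
  have hif : IntervalIntegrable (fun s : ℝ => ((βh - s / b) ^ 2)⁻¹ * (βh + s / b))
      MeasureTheory.volume 0 t := by
    apply ContinuousOn.intervalIntegrable
    rwa [Set.uIcc_of_le ht0]
  have hig : IntervalIntegrable (fun s : ℝ => 2 * βh * ((βh - s / b) ^ 2)⁻¹)
      MeasureTheory.volume 0 t := by
    apply ContinuousOn.intervalIntegrable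
    rwa [Set.uIcc_of_le ht0]
  have hmono : (∫ s in (0:ℝ)..t, ((βh - s / b) ^ 2)⁻¹ * (βh + s / b)) ≤
      ∫ s in (0:ℝ)..t, 2 * βh * ((βh - s / b) ^ 2)⁻¹ := by
    apply intervalIntegral.integral_mono_on ht0 hif hig
    intro s hs
    have h1 : s / b ≤ t / b := by gcongr; exact hs.2
    have h2 : s / b < βh := by linarith
    have h3 : (0:ℝ) < ((βh - s / b) ^ 2)⁻¹ :=
      inv_pos.mpr (pow_pos (hpos s hs) 2)
    rw [mul_comm (2 * βh)]
    apply mul_le_mul_of_nonneg_left _ (le_of_lt h3)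
    linarith
  -- compute the majorant integral
  have hderiv : ∀ s ∈ Set.uIcc (0:ℝ) t,
      HasDerivAt (fun s : ℝ => 2 * βh * b * (βh - s / b)⁻¹)
        (2 * βh * ((βh - s / b) ^ 2)⁻¹) s := by
    intro s hs
    rw [Set.uIcc_of_le ht0] at hs
    have hne : βh - s / b ≠ 0 := ne_of_gt (hpos s hs)
    have h1 : HasDerivAt (fun s : ℝ => βh - s / b) (-b⁻¹) s := by
      have := ((hasDerivAt_id s).div_const b).const_sub βh
      simpa using this
    have h2 := (h1.inv hne).const_mul (2 * βh * b)
    have hb' : b ≠ 0 := ne_of_gt hb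
    have heq : 2 * βh * b * (- -b⁻¹ / (βh - s / b) ^ 2) =
        2 * βh * ((βh - s / b) ^ 2)⁻¹ := by
      rw [neg_neg, div_eq_mul_inv,
        show 2 * βh * b * (b⁻¹ * ((βh - s / b) ^ 2)⁻¹) =
          2 * βh * (b * b⁻¹) * ((βh - s / b) ^ 2)⁻¹ from by ring,
        mul_inv_cancel₀ hb']
      ring
    exact heq ▸ h2
  have hint : (∫ s in (0:ℝ)..t, 2 * βh * ((βh - s / b) ^ 2)⁻¹) =
      2 * βh * b * (βh - t / b)⁻¹ - 2 * βh * b * (βh - 0 / b)⁻¹ := by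
    exact intervalIntegral.integral_eq_sub_of_hasDerivAt hderiv hig
  have hb' : b ≠ 0 := ne_of_gt hb
  have key : (∫ s in (0:ℝ)..t, 2 * βh * ((βh - s / b) ^ 2)⁻¹) ≤
      2 * βh * b * (βh - t / b)⁻¹ := by
    rw [hint]
    have : 0 ≤ 2 * βh * b * (βh - 0 / b)⁻¹ := by
      apply mul_nonneg (by positivity)
      simp [inv_nonneg, le_of_lt hβ]
    linarith
  have hrhs : 4 * b * (1 - t / (b * βh))⁻¹ = 2 * (2 * βh * b * (βh - t / b)⁻¹) := by
    have h1 : 1 - t / (b * βh) = (βh - t / b) / βh := by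
      field_simp
    rw [h1, inv_div]
    field_simp
    ring
  rw [hrhs]
  linarith
end

section
/- Let T > 0, μ ≥ 0, and for each integer n ≥ 1 let δ_n : [0, T) → [0, ∞) be measurable and bounded on [0, t] for every t < T. Assume that δ_n(t) ≤ 2 n (t + 1) μ ∫₀^t δ_{n+1}(s) ds for all n ≥ 1 and all t ∈ [0, T). Then for all integers n ≥ 1, N ≥ 1 and all t ∈ [0, T), δ_n(t) ≤ (2 (t + 1) t μ)^N / N! · n (n+1) ⋯ (n+N−1) · sup_{0 ≤ s ≤ t} δ_{n+N}(s). -/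
open scoped BigOperators

theorem statement10 (T μ : ℝ) (hT : 0 < T) (hμ : 0 ≤ μ)
    (δ : ℕ → ℝ → ℝ)
    (hmeas : ∀ n : ℕ, Measurable (δ n))
    (hnonneg : ∀ n : ℕ, 1 ≤ n → ∀ t : ℝ, 0 ≤ t → t < T → 0 ≤ δ n t)
    (hbdd : ∀ n : ℕ, 1 ≤ n → ∀ t : ℝ, 0 ≤ t → t < T → BddAbove (δ n '' Set.Icc 0 t))
    (hrec : ∀ n : ℕ, 1 ≤ n → ∀ t : ℝ, 0 ≤ t → t < T →
      δ n t ≤ 2 * n * (t + 1) * μ * ∫ s in (0:ℝ)..t, δ (n + 1) s)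
    (n N : ℕ) (hn : 1 ≤ n) (hN : 1 ≤ N) (t : ℝ) (ht0 : 0 ≤ t) (htT : t < T) :
    δ n t ≤ (2 * (t + 1) * t * μ) ^ N / (Nat.factorial N : ℝ) *
      (∏ i ∈ Finset.range N, ((n + i : ℕ) : ℝ)) *
      sSup (δ (n + N) '' Set.Icc 0 t) := by
  have key : ∀ N : ℕ, ∀ n : ℕ, 1 ≤ n → ∀ s ∈ Set.Icc (0:ℝ) t,
      δ n s ≤ (2 * (t + 1) * μ) ^ N / (Nat.factorial N : ℝ) *
        (∏ i ∈ Finset.range N, ((n + i : ℕ) : ℝ)) * s ^ N *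
        sSup (δ (n + N) '' Set.Icc 0 t) := by
    intro N
    induction N with
    | zero =>
      intro n hn s hs
      simpa using le_csSup (hbdd n hn t ht0 htT) (Set.mem_image_of_mem _ hs)
    | succ N IH =>
      intro n hn s hs
      have hsT : s < T := lt_of_le_of_lt hs.2 htT
      have hC : (0:ℝ) ≤ 2 * (t + 1) * μ := by positivity
      set M : ℝ := sSup (δ (n + 1 + N) '' Set.Icc 0 t) with hM
      have hM0 : 0 ≤ M := by
        refine le_trans (hnonneg (n + 1 + N) (by omega) 0 le_rfl hT)
          (le_csSup (hbdd _ (by omega) t ht0 htT) ?_)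
        exact Set.mem_image_of_mem _ ⟨le_rfl, ht0⟩
      set P : ℝ := ∏ i ∈ Finset.range N, ((n + 1 + i : ℕ) : ℝ) with hP
      have hP0 : 0 ≤ P := Finset.prod_nonneg fun i _ => by positivity
      set A : ℝ := (2 * (t + 1) * μ) ^ N / (Nat.factorial N : ℝ) * P * M with hA
      have hA0 : 0 ≤ A := by positivity
      -- integrability of δ (n+1) on [0, s]
      obtain ⟨B, hB⟩ := hbdd (n + 1) (by omega) s hs.1 hsT
      have hint : IntervalIntegrable (δ (n + 1)) MeasureTheory.volume 0 s := by
        rw [intervalIntegrable_iff_integrableOn_Icc_of_le hs.1]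
        refine MeasureTheory.Measure.integrableOn_of_bounded (M := B)
          measure_Icc_lt_top.ne ((hmeas _).aestronglyMeasurable) ?_
        filter_upwards [MeasureTheory.ae_restrict_mem measurableSet_Icc] with u hu
        rw [Real.norm_eq_abs,
          abs_of_nonneg (hnonneg _ (by omega) u hu.1 (lt_of_le_of_lt hu.2 hsT))]
        exact hB (Set.mem_image_of_mem _ hu)
      have hint2 : IntervalIntegrable (fun u : ℝ => A * u ^ N)
          MeasureTheory.volume 0 s := by
        exact (Continuous.intervalIntegrable (by continuity) 0 s)
      have hmono : (∫ u in (0:ℝ)..s, δ (n + 1) u) ≤ ∫ u in (0:ℝ)..s, A * u ^ N := by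
        refine intervalIntegral.integral_mono_on hs.1 hint hint2 ?_
        intro u hu
        have := IH (n + 1) (by omega) u ⟨hu.1, hu.2.trans hs.2⟩
        calc δ (n + 1) u ≤ _ := this
          _ = A * u ^ N := by rw [hA]; ring
      have hval : (∫ u in (0:ℝ)..s, A * u ^ N) = A * (s ^ (N + 1) / (N + 1)) := by
        rw [intervalIntegral.integral_const_mul, integral_pow]
        norm_num
      have h1 := hrec n hn s hs.1 hsT
      have h2 : δ n s ≤ 2 * n * (s + 1) * μ * (A * (s ^ (N + 1) / (N + 1))) := by
        refine h1.trans ?_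
        rw [← hval]
        have hco : (0:ℝ) ≤ 2 * n * (s + 1) * μ := by
          have : (0:ℝ) ≤ s + 1 := by linarith [hs.1]
          positivity
        exact mul_le_mul_of_nonneg_left hmono hco
      have h3 : δ n s ≤ 2 * n * (t + 1) * μ * (A * (s ^ (N + 1) / (N + 1))) := by
        refine h2.trans ?_
        have hrest : (0:ℝ) ≤ A * (s ^ (N + 1) / (N + 1)) :=
          mul_nonneg hA0 (div_nonneg (pow_nonneg hs.1 _) (by positivity))
        refine mul_le_mul_of_nonneg_right ?_ hrest
        have : s + 1 ≤ t + 1 := by linarith [hs.2]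
        have hn0 : (0:ℝ) ≤ (n:ℝ) := by positivity
        nlinarith [mul_nonneg (mul_nonneg hn0 hμ) (sub_nonneg.mpr hs.2)]
      refine h3.trans_eq ?_
      have hPeq : (∏ i ∈ Finset.range (N + 1), ((n + i : ℕ) : ℝ)) = (n : ℝ) * P := by
        rw [hP, Finset.prod_range_succ']
        simp only [Nat.add_zero]
        rw [mul_comm]
        congr 1
        refine Finset.prod_congr rfl fun i _ => ?_
        congr 1
        omega
      have hfac : ((Nat.factorial (N + 1) : ℕ) : ℝ) = ((N : ℝ) + 1) * (Nat.factorial N : ℝ) := by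
        push_cast [Nat.factorial_succ]; ring
      rw [hPeq, show n + (N + 1) = n + 1 + N from by omega, ← hM, hfac, hA]
      simp only [div_eq_mul_inv, mul_inv]
      ring
  have h := key N n hn t ⟨ht0, le_rfl⟩
  refine h.trans_eq ?_
  rw [show (2 * (t + 1) * t * μ) ^ N = (2 * (t + 1) * μ) ^ N * t ^ N by
    rw [← mul_pow]; ring_nf]
  ring
end

section
/- Let T > 0, μ ≥ 0, β ≥ 0, r ≥ 0, R ≥ 0, and for each integer n ≥ 1 let δ_n : [0, T) → [0, ∞) be measurable with δ_n(t) ≤ 2 n (t + 1) μ ∫₀^t δ_{n+1}(s) ds for all n ≥ 1 and t ∈ [0, T), and δ_n(s) ≤ 4 e^{β n r} R for all n ≥ 1 and s ∈ [0, T). Then for all integers n ≥ 1, all t ∈ [0, T), and all integers N ≥ n, δ_n(t) ≤ 4 e^{β n r} R (4 e^{β r + 1} μ (t + 1) t)^N. -/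
lemma choose_le_two_pow_aux (m k : ℕ) : m.choose k ≤ 2 ^ m := by
  rcases le_or_gt k m with h | h
  · calc m.choose k ≤ ∑ i ∈ Finset.range (m + 1), m.choose i :=
          Finset.single_le_sum (fun i _ => Nat.zero_le _)
            (Finset.mem_range.mpr (Nat.lt_succ_of_le h))
      _ = 2 ^ m := Nat.sum_range_choose m
  · rw [Nat.choose_eq_zero_of_lt h]; exact Nat.zero_le _

theorem statement11 (T μ β r R : ℝ) (hT : 0 < T) (hμ : 0 ≤ μ) (hβ : 0 ≤ β)
    (hr : 0 ≤ r) (hR : 0 ≤ R)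
    (δ : ℕ → ℝ → ℝ)
    (hmeas : ∀ n : ℕ, Measurable (δ n))
    (hnonneg : ∀ n : ℕ, 1 ≤ n → ∀ t : ℝ, 0 ≤ t → t < T → 0 ≤ δ n t)
    (hrec : ∀ n : ℕ, 1 ≤ n → ∀ t : ℝ, 0 ≤ t → t < T →
      δ n t ≤ 2 * n * (t + 1) * μ * ∫ s in (0:ℝ)..t, δ (n + 1) s)
    (hbd : ∀ n : ℕ, 1 ≤ n → ∀ s : ℝ, 0 ≤ s → s < T →
      δ n s ≤ 4 * Real.exp (β * n * r) * R)
    (n N : ℕ) (hn : 1 ≤ n) (hnN : n ≤ N) (t : ℝ) (ht0 : 0 ≤ t) (htT : t < T) :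
    δ n t ≤ 4 * Real.exp (β * n * r) * R *
      (4 * Real.exp (β * r + 1) * μ * (t + 1) * t) ^ N := by
  -- Key iterated bound
  have key : ∀ k : ℕ, ∀ m : ℕ, 1 ≤ m → ∀ u : ℝ, 0 ≤ u → u < T →
      δ m u ≤ 4 * Real.exp (β * m * r) * R *
        (2 * Real.exp (β * r) * μ * (u + 1)) ^ k * (m.ascFactorial k) * u ^ k
          / (k.factorial : ℝ) := by
    intro k
    induction k with
    | zero =>
      intro m hm u hu0 huT
      simpa using hbd m hm u hu0 huT
    | succ k ih =>
      intro m hm u hu0 huT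
      set C : ℝ := 4 * Real.exp (β * (m + 1) * r) * R *
        (2 * Real.exp (β * r) * μ * (u + 1)) ^ k * ((m + 1).ascFactorial k)
          / (k.factorial : ℝ) with hC
      have hCnonneg : 0 ≤ C := by
        apply div_nonneg _ (by positivity)
        have := Real.exp_pos (β * (m + 1) * r)
        positivity
      -- pointwise bound on [0, u]
      have hpt : ∀ s ∈ Set.Icc (0:ℝ) u, δ (m + 1) s ≤ C * s ^ k := by
        intro s hs
        have hs0 : 0 ≤ s := hs.1
        have hsT : s < T := lt_of_le_of_lt hs.2 huT
        have h1 := ih (m + 1) (by omega) s hs0 hsT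
        refine h1.trans ?_
        rw [hC]
        rw [div_mul_eq_mul_div, div_le_div_iff_of_pos_right (by positivity)]
        have hpow : (2 * Real.exp (β * r) * μ * (s + 1)) ^ k ≤
            (2 * Real.exp (β * r) * μ * (u + 1)) ^ k := by
          apply pow_le_pow_left₀ (by positivity)
          have h1u : s + 1 ≤ u + 1 := by linarith [hs.2]
          exact mul_le_mul_of_nonneg_left h1u (by positivity)
        have h2 : (0:ℝ) ≤ 4 * Real.exp (β * ((m:ℝ) + 1) * r) * R *
            ((m + 1).ascFactorial k) * s ^ k := by positivity
        push_cast
        nlinarith [pow_nonneg hs0 k,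
          mul_nonneg (mul_nonneg (mul_nonneg (by positivity :
            (0:ℝ) ≤ 4 * Real.exp (β * ((m:ℝ) + 1) * r)) hR)
            (by positivity : (0:ℝ) ≤ (((m + 1).ascFactorial k : ℕ) : ℝ))) (pow_nonneg hs0 k)]
      -- integrability
      have hint : IntervalIntegrable (δ (m + 1)) MeasureTheory.volume 0 u := by
        apply (intervalIntegrable_const (c := 4 * Real.exp (β * (m+1) * r) * R)).mono_fun
          (hmeas (m + 1)).aestronglyMeasurable
        rw [Set.uIoc_of_le hu0]
        refine (MeasureTheory.ae_restrict_iff' measurableSet_Ioc).mpr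
          (MeasureTheory.ae_of_all _ fun s hs => ?_)
        have hs0 : 0 ≤ s := le_of_lt hs.1
        have hsT : s < T := lt_of_le_of_lt hs.2 huT
        have hnn := hnonneg (m + 1) (by omega) s hs0 hsT
        have hub := hbd (m + 1) (by omega) s hs0 hsT
        simp only [Real.norm_eq_abs, abs_of_nonneg hnn]
        push_cast at hub
        exact hub.trans (le_abs_self _)
      have hint2 : IntervalIntegrable (fun s => C * s ^ k) MeasureTheory.volume 0 u :=
        (intervalIntegral.intervalIntegrable_pow k).const_mul C
      have hIle : (∫ s in (0:ℝ)..u, δ (m + 1) s) ≤ C * (u ^ (k + 1) / (k + 1)) := by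
        calc (∫ s in (0:ℝ)..u, δ (m + 1) s) ≤ ∫ s in (0:ℝ)..u, C * s ^ k :=
              intervalIntegral.integral_mono_on hu0 hint hint2 hpt
          _ = C * (u ^ (k + 1) / (k + 1)) := by
              rw [intervalIntegral.integral_const_mul, integral_pow]
              norm_num
      have hmain := hrec m hm u hu0 huT
      have hfac : (0:ℝ) ≤ 2 * m * (u + 1) * μ := by positivity
      have h3 : δ m u ≤ 2 * m * (u + 1) * μ * (C * (u ^ (k + 1) / (k + 1))) :=
        hmain.trans (mul_le_mul_of_nonneg_left hIle hfac)
      refine h3.trans (le_of_eq ?_)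
      rw [hC]
      have hasc : ((m.ascFactorial (k + 1) : ℕ) : ℝ) =
          (m : ℝ) * ((m + 1).ascFactorial k : ℕ) := by
        have := Nat.succ_ascFactorial m k
        have h' : m.ascFactorial (k + 1) = m * (m + 1).ascFactorial k := by
          rw [Nat.ascFactorial_succ, ← Nat.succ_ascFactorial]
        rw [h']; push_cast; ring
      have hexp : Real.exp (β * ((m : ℝ) + 1) * r) =
          Real.exp (β * m * r) * Real.exp (β * r) := by
        rw [← Real.exp_add]; ring_nf
      rw [Nat.factorial_succ]
      push_cast
      rw [hasc, hexp, pow_succ]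
      have hk1 : ((k:ℝ) + 1) ≠ 0 := by positivity
      have hkf : ((k.factorial : ℕ) : ℝ) ≠ 0 := by positivity
      field_simp
      ring
  have hkey := key N n hn t ht0 htT
  refine hkey.trans ?_
  -- Compare the combinatorial factor with the exponential one.
  have hasc_le : ((n.ascFactorial N : ℕ) : ℝ) ≤ (2 * Real.exp 1) ^ N * N.factorial := by
    have h1 : n.ascFactorial N = N.factorial * (n + N - 1).choose N :=
      Nat.ascFactorial_eq_factorial_mul_choose' n N
    have h2 : (n + N - 1).choose N ≤ 2 ^ (n + N - 1) := choose_le_two_pow_aux _ _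
    have h3 : 2 ^ (n + N - 1) ≤ 2 ^ (2 * N) := Nat.pow_le_pow_right (by norm_num) (by omega)
    have h4 : (n.ascFactorial N : ℝ) ≤ (4 : ℝ) ^ N * N.factorial := by
      have : n.ascFactorial N ≤ N.factorial * 2 ^ (2 * N) := by
        rw [h1]; exact Nat.mul_le_mul_left _ (h2.trans h3)
      calc ((n.ascFactorial N : ℕ) : ℝ) ≤ ((N.factorial * 2 ^ (2 * N) : ℕ) : ℝ) := by
            exact_mod_cast this
        _ = (4 : ℝ) ^ N * N.factorial := by
            push_cast [pow_mul]; ring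
    refine h4.trans ?_
    have he : (4 : ℝ) ≤ 2 * Real.exp 1 := by
      nlinarith [Real.add_one_le_exp (1:ℝ)]
    exact mul_le_mul_of_nonneg_right
      (pow_le_pow_left₀ (by norm_num) he N) (by positivity)
  have hNf : (0:ℝ) < (N.factorial : ℝ) := by positivity
  rw [div_le_iff₀ hNf]
  have hexp1 : Real.exp (β * r + 1) = Real.exp (β * r) * Real.exp 1 := Real.exp_add _ _
  have hbase : (4 * Real.exp (β * r + 1) * μ * (t + 1) * t) ^ N =
      (2 * Real.exp (β * r) * μ * (t + 1)) ^ N * t ^ N * (2 * Real.exp 1) ^ N := by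
    rw [← mul_pow, ← mul_pow, hexp1]; ring_nf
  rw [hbase]
  have h0 : (0:ℝ) ≤ 4 * Real.exp (β * n * r) * R *
      (2 * Real.exp (β * r) * μ * (t + 1)) ^ N * t ^ N := by positivity
  calc 4 * Real.exp (β * n * r) * R * (2 * Real.exp (β * r) * μ * (t + 1)) ^ N *
        ((n.ascFactorial N : ℕ) : ℝ) * t ^ N
      = (4 * Real.exp (β * n * r) * R * (2 * Real.exp (β * r) * μ * (t + 1)) ^ N * t ^ N) *
        ((n.ascFactorial N : ℕ) : ℝ) := by ring
    _ ≤ (4 * Real.exp (β * n * r) * R * (2 * Real.exp (β * r) * μ * (t + 1)) ^ N * t ^ N) *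
        ((2 * Real.exp 1) ^ N * N.factorial) := mul_le_mul_of_nonneg_left hasc_le h0
    _ = 4 * Real.exp (β * n * r) * R *
        ((2 * Real.exp (β * r) * μ * (t + 1)) ^ N * t ^ N * (2 * Real.exp 1) ^ N) *
        (N.factorial : ℝ) := by ring
end

section
/- Let T > 0, μ ≥ 0, β ≥ 0, r ≥ 0, R ≥ 0, and for each integer n ≥ 1 let δ_n : [0, T) → [0, ∞) be measurable with δ_n(t) ≤ 2 n (t + 1) μ ∫₀^t δ_{n+1}(s) ds for all n ≥ 1 and t ∈ [0, T), and δ_n(s) ≤ 4 e^{β n r} R for all n ≥ 1 and s ∈ [0, T). Then δ_n(t) = 0 for every n ≥ 1 and every t ∈ [0, T) satisfying 4 e^{β r + 1} μ (t + 1) t < 1. -/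
set_option maxHeartbeats 1000000 in
theorem statement12 (T μ β r R : ℝ) (hT : 0 < T) (hμ : 0 ≤ μ) (hβ : 0 ≤ β)
    (hr : 0 ≤ r) (hR : 0 ≤ R)
    (δ : ℕ → ℝ → ℝ)
    (hmeas : ∀ n : ℕ, Measurable (δ n))
    (hnonneg : ∀ n : ℕ, 1 ≤ n → ∀ t : ℝ, 0 ≤ t → t < T → 0 ≤ δ n t)
    (hrec : ∀ n : ℕ, 1 ≤ n → ∀ t : ℝ, 0 ≤ t → t < T →
      δ n t ≤ 2 * n * (t + 1) * μ * ∫ s in (0:ℝ)..t, δ (n + 1) s)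
    (hbd : ∀ n : ℕ, 1 ≤ n → ∀ s : ℝ, 0 ≤ s → s < T →
      δ n s ≤ 4 * Real.exp (β * n * r) * R)
    (n : ℕ) (hn : 1 ≤ n) (t : ℝ) (ht0 : 0 ≤ t) (htT : t < T)
    (hsmall : 4 * Real.exp (β * r + 1) * μ * (t + 1) * t < 1) :
    δ n t = 0 := by
  -- key induction: iterated bound
  have key : ∀ k : ℕ, ∀ m : ℕ, 1 ≤ m → ∀ s : ℝ, 0 ≤ s → s ≤ t →
      δ m s ≤ 4 * R * Real.exp (β * (m + k) * r) * (2 * μ * (t + 1)) ^ k *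
        ((m + k).choose k) * s ^ k := by
    intro k
    induction k with
    | zero =>
      intro m hm s hs0 hst
      simpa using
        (hbd m hm s hs0 (lt_of_le_of_lt hst htT)).trans_eq (by push_cast; ring)
    | succ k ih =>
      intro m hm s hs0 hst
      have hsT : s < T := lt_of_le_of_lt hst htT
      have hint_le : (∫ u in (0:ℝ)..s, δ (m + 1) u) ≤
          ∫ u in (0:ℝ)..s, 4 * R * Real.exp (β * ((m:ℝ) + 1 + k) * r) *
            (2 * μ * (t + 1)) ^ k * ((m + 1 + k).choose k) * u ^ k := by
        have hi1 : IntervalIntegrable (δ (m + 1)) MeasureTheory.volume 0 s := by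
          refine (intervalIntegrable_const (c := 4 * Real.exp (β * (m+1 : ℕ) * r) * R)).mono_fun'
            ((hmeas (m+1)).aestronglyMeasurable.restrict) ?_
          filter_upwards [MeasureTheory.ae_restrict_mem measurableSet_uIoc] with x hx
          rw [Set.uIoc_of_le hs0] at hx
          have hx0 : 0 ≤ x := le_of_lt hx.1
          have hxT : x < T := lt_of_le_of_lt (hx.2.trans hst) htT
          have := hbd (m+1) (by omega) x hx0 hxT
          have hnn := hnonneg (m+1) (by omega) x hx0 hxT
          simpa [Real.norm_eq_abs, abs_of_nonneg hnn] using this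
        have hi2 : IntervalIntegrable (fun u => 4 * R * Real.exp (β * ((m:ℝ) + 1 + k) * r) *
            (2 * μ * (t + 1)) ^ k * ((m + 1 + k).choose k) * u ^ k) MeasureTheory.volume 0 s :=
          (Continuous.intervalIntegrable (by continuity) 0 s)
        refine intervalIntegral.integral_mono_on hs0 hi1 hi2 ?_
        intro x hx
        have hx0 : 0 ≤ x := hx.1
        have hxt : x ≤ t := hx.2.trans hst
        have := ih (m+1) (by omega) x hx0 hxt
        refine this.trans_eq ?_
        push_cast; ring_nf
      have hrec' := hrec m hm s hs0 hsT
      have hintnn : 0 ≤ ∫ u in (0:ℝ)..s, δ (m + 1) u := by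
        apply intervalIntegral.integral_nonneg hs0
        intro x hx
        exact hnonneg (m+1) (by omega) x hx.1 (lt_of_le_of_lt (hx.2.trans hst) htT)
      have hpow : (∫ u in (0:ℝ)..s, (u:ℝ) ^ k) = s ^ (k+1) / (k+1) := by
        rw [integral_pow]; simp
      have hint_val : (∫ u in (0:ℝ)..s, 4 * R * Real.exp (β * ((m:ℝ) + 1 + k) * r) *
            (2 * μ * (t + 1)) ^ k * ((m + 1 + k).choose k) * u ^ k) =
          4 * R * Real.exp (β * ((m:ℝ) + 1 + k) * r) *
            (2 * μ * (t + 1)) ^ k * ((m + 1 + k).choose k) * (s ^ (k+1) / (k+1)) := by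
        rw [intervalIntegral.integral_const_mul, hpow]
      have hcoef : 0 ≤ 2 * (m:ℝ) * (s + 1) * μ := by positivity
      have step1 : δ m s ≤ 2 * m * (s + 1) * μ *
          (4 * R * Real.exp (β * ((m:ℝ) + 1 + k) * r) *
            (2 * μ * (t + 1)) ^ k * ((m + 1 + k).choose k) * (s ^ (k+1) / (k+1))) := by
        calc δ m s ≤ 2 * m * (s + 1) * μ * ∫ u in (0:ℝ)..s, δ (m + 1) u := hrec'
          _ ≤ _ := by
            rw [← hint_val]; exact mul_le_mul_of_nonneg_left hint_le hcoef
      -- combinatorial identity: (k+1) * C(m+k+1, k+1) = (m+1) * C(m+k+1, k) ≥ m * C(m+1+k, k)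
      have hchoose : (m : ℝ) * ((m + 1 + k).choose k) ≤
          ((k:ℝ) + 1) * ((m + (k+1)).choose (k+1)) := by
        have hnat : (m + k + 1).choose (k + 1) * (k + 1) = (m + k + 1).choose k * (m + 1) := by
          rw [Nat.choose_succ_right_eq]
          congr 1
          omega
        have : ((m + k + 1).choose (k+1) : ℝ) * (k + 1) = ((m + k + 1).choose k : ℝ) * (m + 1) := by
          exact_mod_cast congrArg (Nat.cast (R := ℝ)) hnat
        have hm1k : m + 1 + k = m + k + 1 := by omega
        have hmk1 : m + (k + 1) = m + k + 1 := by omega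
        rw [hm1k, hmk1]
        nlinarith [this, (by positivity : (0:ℝ) ≤ ((m+k+1).choose (k+1) : ℝ)),
          (by positivity : (0:ℝ) ≤ ((m+k+1).choose k : ℝ))]
      -- final arithmetic
      have hs1t1 : s + 1 ≤ t + 1 := by linarith
      have hE : Real.exp (β * ((m:ℝ) + 1 + k) * r) = Real.exp (β * ((m:ℝ) + (k+1)) * r) := by
        ring_nf
      have hposE : 0 < Real.exp (β * ((m:ℝ) + (k+1)) * r) := Real.exp_pos _
      have hspow : (0:ℝ) ≤ s ^ (k+1) := by positivity
      refine step1.trans ?_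
      have hk1 : (0:ℝ) < (k:ℝ) + 1 := by positivity
      set E := Real.exp (β * ((m:ℝ) + 1 + k) * r) with hEdef
      have hEpos : 0 < E := Real.exp_pos _
      set C1 : ℝ := ((m + 1 + k).choose k : ℝ) with hC1
      set C2 : ℝ := ((m + (k+1)).choose (k+1) : ℝ) with hC2
      have hA : (0:ℝ) ≤ 4 * R * E * (2 * μ * (t + 1)) ^ k * s ^ (k+1) / ((k:ℝ)+1) := by
        positivity
      have h2 : 2 * (s + 1) * μ ≤ 2 * (t + 1) * μ := by nlinarith
      have hmain : ((m:ℝ) * C1) * (2 * (s + 1) * μ) ≤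
          (((k:ℝ) + 1) * C2) * (2 * (t + 1) * μ) := by
        refine mul_le_mul hchoose h2 (by positivity) ?_
        positivity
      have hfinal := mul_le_mul_of_nonneg_right hmain hA
      calc 2 * (m:ℝ) * (s + 1) * μ *
            (4 * R * E * (2 * μ * (t + 1)) ^ k * C1 * (s ^ (k+1) / ((k:ℝ)+1)))
          = ((m:ℝ) * C1) * (2 * (s + 1) * μ) *
            (4 * R * E * (2 * μ * (t + 1)) ^ k * s ^ (k+1) / ((k:ℝ)+1)) := by ring
        _ ≤ (((k:ℝ) + 1) * C2) * (2 * (t + 1) * μ) *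
            (4 * R * E * (2 * μ * (t + 1)) ^ k * s ^ (k+1) / ((k:ℝ)+1)) := hfinal
        _ = 4 * R * Real.exp (β * ((m:ℝ) + (k+1:ℕ)) * r) * (2 * μ * (t + 1)) ^ (k+1) *
            C2 * s ^ (k+1) := by
            have hEE : Real.exp (β * ((m:ℝ) + (k+1:ℕ)) * r) = E := by
              rw [hEdef]; push_cast; ring_nf
            rw [hEE]
            have hne : ((k:ℝ) + 1) ≠ 0 := ne_of_gt hk1
            rw [show (((k:ℝ) + 1) * C2) * (2 * (t + 1) * μ) *
                (4 * R * E * (2 * μ * (t + 1)) ^ k * s ^ (k+1) / ((k:ℝ)+1)) =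
                (C2 * (2 * (t + 1) * μ) * (4 * R * E * (2 * μ * (t + 1)) ^ k * s ^ (k+1))) *
                (((k:ℝ) + 1) / ((k:ℝ) + 1)) from by ring, div_self hne, mul_one]
            ring
  -- conclude
  have choose_le : ∀ N k : ℕ, N.choose k ≤ 2 ^ N := by
    intro N k
    rcases le_or_gt k N with h | h
    · calc N.choose k ≤ ∑ i ∈ Finset.range (N+1), N.choose i :=
          Finset.single_le_sum (fun i _ => Nat.zero_le _) (Finset.mem_range.2 (by omega))
        _ = 2 ^ N := Nat.sum_range_choose N
    · simp [Nat.choose_eq_zero_of_lt h]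
  set q : ℝ := 4 * Real.exp (β * r) * μ * (t + 1) * t with hq
  set C0 : ℝ := 4 * R * Real.exp (β * n * r) * 2 ^ n with hC0
  have bound : ∀ k : ℕ, δ n t ≤ C0 * q ^ k := by
    intro k
    have hkey := key k n hn t ht0 le_rfl
    have hCle : (((n + k).choose k : ℕ) : ℝ) ≤ 2 ^ n * 2 ^ k := by
      calc (((n + k).choose k : ℕ) : ℝ) ≤ ((2 ^ (n + k) : ℕ) : ℝ) :=
            Nat.cast_le.2 (choose_le _ _)
        _ = 2 ^ n * 2 ^ k := by push_cast [pow_add]; ring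
    have hexp : Real.exp (β * ((n:ℝ) + k) * r) =
        Real.exp (β * n * r) * (Real.exp (β * r)) ^ k := by
      rw [← Real.exp_nat_mul, ← Real.exp_add]; ring_nf
    calc δ n t ≤ 4 * R * Real.exp (β * ((n:ℝ) + k) * r) * (2 * μ * (t + 1)) ^ k *
          (((n + k).choose k : ℕ) : ℝ) * t ^ k := hkey
      _ = (4 * R * Real.exp (β * n * r)) * (((n + k).choose k : ℕ) : ℝ) *
          ((Real.exp (β * r)) ^ k * (2 * μ * (t + 1)) ^ k * t ^ k) := by rw [hexp]; ring
      _ ≤ (4 * R * Real.exp (β * n * r)) * (2 ^ n * 2 ^ k) *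
          ((Real.exp (β * r)) ^ k * (2 * μ * (t + 1)) ^ k * t ^ k) := by
          refine mul_le_mul_of_nonneg_right
            (mul_le_mul_of_nonneg_left hCle (by positivity)) ?_
          positivity
      _ = C0 * q ^ k := by
          rw [hC0, hq, show (4:ℝ) * Real.exp (β * r) * μ * (t + 1) * t =
            2 * (2 * Real.exp (β * r) * μ * (t + 1) * t) from by ring]
          simp only [mul_pow]
          ring
  have hq0 : 0 ≤ q := by rw [hq]; positivity
  have hq1 : q < 1 := by
    have he : Real.exp (β * r) ≤ Real.exp (β * r + 1) := Real.exp_le_exp.2 (by linarith)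
    have h4 : (0:ℝ) ≤ 4 * μ * (t + 1) * t := by positivity
    nlinarith [he, hsmall]
  have hten : Filter.Tendsto (fun k : ℕ => C0 * q ^ k) Filter.atTop (nhds 0) := by
    have := tendsto_pow_atTop_nhds_zero_of_lt_one hq0 hq1
    simpa using this.const_mul C0
  have hle0 : δ n t ≤ 0 := ge_of_tendsto' hten bound
  exact le_antisymm hle0 (hnonneg n hn t ht0 htT)
end

section
/- Let 0 < β < α and let a : ℤ → ℂ satisfy ∑_{k∈ℤ} |a_k|² e^{α k²} < ∞. Then the family (k² |a_k|² e^{β k²})_{k∈ℤ} is summable and ∑_{k∈ℤ} k² |a_k|² e^{β k²} ≤ (e (α − β))^{−1} ∑_{k∈ℤ} |a_k|² e^{α k²}. -/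
lemma key_ineq (δ x : ℝ) (hδ : 0 < δ) (hx : 0 ≤ x) :
    x * Real.exp (-δ * x) ≤ (Real.exp 1 * δ)⁻¹ := by
  have hpos : (0:ℝ) < Real.exp 1 * δ := by positivity
  have h2 : δ * x ≤ Real.exp (δ * x) / Real.exp 1 := by
    have := Real.add_one_le_exp (δ * x - 1)
    rw [Real.exp_sub] at this
    linarith
  have hex : (0:ℝ) < Real.exp (δ * x) := Real.exp_pos _
  rw [neg_mul, Real.exp_neg, ← div_eq_mul_inv, div_le_iff₀ hex]
  have h3 : δ * x * Real.exp 1 ≤ Real.exp (δ * x) := by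
    rw [← le_div_iff₀ (Real.exp_pos 1)]; exact h2
  rw [inv_mul_eq_div, le_div_iff₀ hpos]
  nlinarith

theorem statement13 (α β : ℝ) (hβ : 0 < β) (hβα : β < α) (a : ℤ → ℂ)
    (ha : Summable fun k : ℤ => ‖a k‖ ^ 2 * Real.exp (α * (k : ℝ) ^ 2)) :
    Summable (fun k : ℤ => (k : ℝ) ^ 2 * ‖a k‖ ^ 2 * Real.exp (β * (k : ℝ) ^ 2)) ∧
    ∑' k : ℤ, (k : ℝ) ^ 2 * ‖a k‖ ^ 2 * Real.exp (β * (k : ℝ) ^ 2) ≤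
      (Real.exp 1 * (α - β))⁻¹ * ∑' k : ℤ, ‖a k‖ ^ 2 * Real.exp (α * (k : ℝ) ^ 2) := by
  set c := (Real.exp 1 * (α - β))⁻¹ with hc
  have hδ : 0 < α - β := by linarith
  have hcpos : 0 < c := by positivity
  have hle : ∀ k : ℤ, (k : ℝ) ^ 2 * ‖a k‖ ^ 2 * Real.exp (β * (k : ℝ) ^ 2) ≤
      c * (‖a k‖ ^ 2 * Real.exp (α * (k : ℝ) ^ 2)) := by
    intro k
    have h := key_ineq (α - β) ((k : ℝ) ^ 2) hδ (by positivity)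
    have hexp : Real.exp (β * (k : ℝ) ^ 2) =
        Real.exp (-(α - β) * (k : ℝ) ^ 2) * Real.exp (α * (k : ℝ) ^ 2) := by
      rw [← Real.exp_add]; ring_nf
    rw [hexp]
    have h2 : (k : ℝ) ^ 2 * Real.exp (-(α - β) * (k : ℝ) ^ 2) ≤ c := h
    have hnn : 0 ≤ ‖a k‖ ^ 2 * Real.exp (α * (k : ℝ) ^ 2) := by positivity
    calc (k : ℝ) ^ 2 * ‖a k‖ ^ 2 * (Real.exp (-(α - β) * (k : ℝ) ^ 2) * Real.exp (α * (k : ℝ) ^ 2))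
        = ((k : ℝ) ^ 2 * Real.exp (-(α - β) * (k : ℝ) ^ 2)) * (‖a k‖ ^ 2 * Real.exp (α * (k : ℝ) ^ 2)) := by ring
      _ ≤ c * (‖a k‖ ^ 2 * Real.exp (α * (k : ℝ) ^ 2)) :=
          mul_le_mul_of_nonneg_right h2 hnn
  have hsum : Summable (fun k : ℤ => c * (‖a k‖ ^ 2 * Real.exp (α * (k : ℝ) ^ 2))) :=
    ha.mul_left c
  have hS : Summable (fun k : ℤ => (k : ℝ) ^ 2 * ‖a k‖ ^ 2 * Real.exp (β * (k : ℝ) ^ 2)) :=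
    Summable.of_nonneg_of_le (fun k => by positivity) hle hsum
  refine ⟨hS, ?_⟩
  calc ∑' k : ℤ, (k : ℝ) ^ 2 * ‖a k‖ ^ 2 * Real.exp (β * (k : ℝ) ^ 2)
      ≤ ∑' k : ℤ, c * (‖a k‖ ^ 2 * Real.exp (α * (k : ℝ) ^ 2)) := Summable.tsum_le_tsum hle hS hsum
    _ = c * ∑' k : ℤ, ‖a k‖ ^ 2 * Real.exp (α * (k : ℝ) ^ 2) := tsum_mul_left
end
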